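/- A nonempty subset L of the graph group G_F is convex if and only if both of the following hold: (i) if x ≤ y ≤ z and x, z ∈ L then y ∈ L; (ii) if x, y ∈ L then x ∧ y ∈ L and, if x ∨ y is finite, x ∨ y ∈ L. -/

import Mathlib

/-!
The core is the solution of the word problem: a word is geodesic iff it contains no
cancellation `γ b γ⁻¹` with every letter of `b` commuting with `γ`. Geodesicity of such reduced
words is proved by letting `G_F` act on reduced words modulo swaps of adjacent commuting letters,
a letter acting by cancelling against the word when possible and by being prepended otherwise.

Reading off first letters from geodesic words, two elements `u, v` without a common first letter
satisfy `|u⁻¹v| = |u| + |v|`. Applied to `m⁻¹x, m⁻¹y` for `m = x ∧ y`, and to `j⁻¹x, j⁻¹y` for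
`j = x ∨ y`, this puts meets and joins on geodesics from `x` to `y`, so convex sets satisfy (ii);
(i) is the triangle inequality. Conversely, if `y` lies on a geodesic from `x` to `z`, length
bookkeeping with these formulas shows `y = (x ∧ y) ∨ (z ∧ y)` and `x ∧ z ≤ x ∧ y, z ∧ y`, so (i)
and (ii) put `y` in `L`. Meets exist because a pair with an upper bound has a join, built by
stripping first letters.
-/

open Pointwise

namespace GraphGroupPaper

/-- The set of commutator relators: `gᵢ` and `gⱼ` commute for every pair of distinct
`i, j` with `{i,j} ∉ F`. -/
def Rels (k : ℕ) (F : Set (Sym2 (Fin k))) : Set (FreeGroup (Fin k)) :=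
  {w | ∃ i j : Fin k, i ≠ j ∧ s(i, j) ∉ F ∧
      w = FreeGroup.of i * FreeGroup.of j * (FreeGroup.of i)⁻¹ * (FreeGroup.of j)⁻¹}

/-- The graph group `G_F` with generators `g₁, …, g_k` and relations `gᵢgⱼ = gⱼgᵢ`
for all distinct `i, j` with `{i,j} ∉ F`. -/
abbrev Grp (k : ℕ) (F : Set (Sym2 (Fin k))) := PresentedGroup (Rels k F)

/-- The generator `gᵢ` of the graph group. -/
def gen (k : ℕ) (F : Set (Sym2 (Fin k))) (i : Fin k) : Grp k F :=
  PresentedGroup.of i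

/-- The group element corresponding to a symbol: `(i, true)` stands for `gᵢ`,
`(i, false)` stands for `gᵢ⁻¹`. -/
def sym (k : ℕ) (F : Set (Sym2 (Fin k))) (α : Fin k × Bool) : Grp k F :=
  if α.2 then gen k F α.1 else (gen k F α.1)⁻¹

/-- The product of the word `l` of symbols, as an element of the graph group. -/
def wordProd (k : ℕ) (F : Set (Sym2 (Fin k))) (l : List (Fin k × Bool)) : Grp k F :=
  (l.map (sym k F)).prod

/-- `|x|` : the length of a shortest word in the symbols representing `x`. -/
noncomputable def len {k : ℕ} {F : Set (Sym2 (Fin k))} (x : Grp k F) : ℕ :=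
  sInf {n | ∃ l : List (Fin k × Bool), wordProd k F l = x ∧ l.length = n}

/-- The partial order on `G_F`:  `x ≤ y` iff `|y| = |x| + |x⁻¹y|`. -/
def le {k : ℕ} {F : Set (Sym2 (Fin k))} (x y : Grp k F) : Prop :=
  len y = len x + len (x⁻¹ * y)

/-- `m` is the meet `x ∧ y` (greatest lower bound w.r.t. `le`). -/
def IsMeet {k : ℕ} {F : Set (Sym2 (Fin k))} (x y m : Grp k F) : Prop :=
  le m x ∧ le m y ∧ ∀ w, le w x → le w y → le w m

/-- `j` is the (finite) join `x ∨ y` (least upper bound w.r.t. `le`);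
`x ∨ y` is finite iff such a `j` exists. -/
def IsJoin {k : ℕ} {F : Set (Sym2 (Fin k))} (x y j : Grp k F) : Prop :=
  le x j ∧ le y j ∧ ∀ w, le x w → le y w → le j w

/-- `j` is the (finite) join of the set `S`. -/
def IsJoinSet {k : ℕ} {F : Set (Sym2 (Fin k))} (S : Set (Grp k F)) (j : Grp k F) : Prop :=
  (∀ s ∈ S, le s j) ∧ ∀ w, (∀ s ∈ S, le s w) → le j w

/-- `y` is a segment of `a` if `a = x·y·z` for some `x, z`. -/
def Segment {k : ℕ} {F : Set (Sym2 (Fin k))} (y a : Grp k F) : Prop :=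
  ∃ x z, a = x * y * z ∧ len a = len x + len y + len z

/-- The left-invariant metric `dist(x,y) = |x⁻¹y|`. -/
noncomputable def dist {k : ℕ} {F : Set (Sym2 (Fin k))} (x y : Grp k F) : ℕ :=
  len (x⁻¹ * y)

/-- A nonempty set `L` is convex if `x, z ∈ L` and `dist(x,y) + dist(y,z) = dist(x,z)`
imply `y ∈ L`. -/
def ConvexSet {k : ℕ} {F : Set (Sym2 (Fin k))} (L : Set (Grp k F)) : Prop :=
  L.Nonempty ∧ ∀ x z y : Grp k F, x ∈ L → z ∈ L →
    dist x y + dist y z = dist x z → y ∈ L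

/-- An ideal: nonempty, downward closed, and closed under finite joins. -/
def IdealSet {k : ℕ} {F : Set (Sym2 (Fin k))} (I : Set (Grp k F)) : Prop :=
  I.Nonempty ∧ (∀ x ∈ I, ∀ y, le y x → y ∈ I) ∧
    (∀ x ∈ I, ∀ y ∈ I, ∀ j, IsJoin x y j → j ∈ I)

/-- `H` is closed if both `H` and `H⁻¹` are ideals. -/
def ClosedSet {k : ℕ} {F : Set (Sym2 (Fin k))} (H : Set (Grp k F)) : Prop :=
  IdealSet H ∧ IdealSet H⁻¹

/-- `m` is a minimal element of `S` w.r.t. `le`. -/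
def MinimalIn {k : ℕ} {F : Set (Sym2 (Fin k))} (S : Set (Grp k F)) (m : Grp k F) : Prop :=
  m ∈ S ∧ ∀ x ∈ S, le x m → x = m

/-- `l` is a reduced (i.e. shortest) word representing `x`. -/
def MinWord {k : ℕ} {F : Set (Sym2 (Fin k))} (x : Grp k F) (l : List (Fin k × Bool)) : Prop :=
  wordProd k F l = x ∧ l.length = len x

open Classical in
/-- `#_α(x)`: the number of occurrences of the symbol `α` (not counting `α⁻¹`)
in a reduced word representing `x`. -/
noncomputable def symCount {k : ℕ} {F : Set (Sym2 (Fin k))} (α : Fin k × Bool)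
    (x : Grp k F) : ℕ :=
  if h : ∃ l, MinWord x l then h.choose.count α else 0

/-- The symbol `α` occurs in `x`. -/
def Occurs {k : ℕ} {F : Set (Sym2 (Fin k))} (α : Fin k × Bool) (x : Grp k F) : Prop :=
  0 < symCount α x

/-- `α` is a maximal symbol of `x`, i.e. `xα⁻¹ ≤ x`. -/
def MaxSym {k : ℕ} {F : Set (Sym2 (Fin k))} (α : Fin k × Bool) (x : Grp k F) : Prop :=
  le (x * (sym k F α)⁻¹) x

/-- A peak: an element with precisely one maximal symbol. -/
def IsPeak {k : ℕ} {F : Set (Sym2 (Fin k))} (p : Grp k F) : Prop :=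
  ∃! α : Fin k × Bool, MaxSym α p

/-- An `α`-peak: a peak whose unique maximal symbol is `α`. -/
def AlphaPeak {k : ℕ} {F : Set (Sym2 (Fin k))} (α : Fin k × Bool) (p : Grp k F) : Prop :=
  MaxSym α p ∧ ∀ β, MaxSym β p → β = α

/-- The set of generator indices occurring in `b`. -/
def Support {k : ℕ} {F : Set (Sym2 (Fin k))} (b : Grp k F) : Set (Fin k) :=
  {i | Occurs (i, true) b ∨ Occurs (i, false) b}

/-- `b` is connected: the generators occurring in `b` induce a connected subgraph of
the graph `([k], F)`. -/
def Conn {k : ℕ} {F : Set (Sym2 (Fin k))} (b : Grp k F) : Prop :=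
  (SimpleGraph.induce (Support b) (SimpleGraph.fromEdgeSet F)).Connected

/-- `b` is cyclically reduced: `b ∧ b⁻¹ = 1`. -/
def CycRed {k : ℕ} {F : Set (Sym2 (Fin k))} (b : Grp k F) : Prop :=
  IsMeet b b⁻¹ 1

variable {k : ℕ} {F : Set (Sym2 (Fin k))}

abbrev Letter (k : ℕ) := Fin k × Bool

namespace Letter

def inv (α : Letter k) : Letter k := (α.1, !α.2)

@[simp] lemma inv_inv (α : Letter k) : α.inv.inv = α := by simp [inv]

@[simp] lemma fst_inv (α : Letter k) : α.inv.1 = α.1 := rfl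

end Letter

def Commutes (F : Set (Sym2 (Fin k))) (α β : Letter k) : Prop :=
  α.1 ≠ β.1 ∧ s(α.1, β.1) ∉ F

section Commutes

variable {α β : Letter k}

lemma Commutes.symm (h : Commutes F α β) : Commutes F β α :=
  ⟨h.1.symm, by rw [Sym2.eq_swap]; exact h.2⟩

@[simp] lemma commutes_inv_left : Commutes F α.inv β ↔ Commutes F α β := Iff.rfl

@[simp] lemma commutes_inv_right : Commutes F α β.inv ↔ Commutes F α β := Iff.rfl

lemma not_commutes_self (α : Letter k) : ¬ Commutes F α α := fun h => h.1 rfl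

lemma Commutes.ne_inv (h : Commutes F α β) : β ≠ α.inv :=
  fun e => h.1 (by rw [e]; rfl)

@[simp] lemma sym_inv (α : Letter k) : sym k F α.inv = (sym k F α)⁻¹ := by
  rcases α with ⟨i, _ | _⟩ <;> simp [sym, Letter.inv]

lemma Commutes.commute_sym (h : Commutes F α β) : Commute (sym k F α) (sym k F β) := by
  have hrel : (QuotientGroup.mk (FreeGroup.of α.1 * FreeGroup.of β.1 * (FreeGroup.of α.1)⁻¹ *
      (FreeGroup.of β.1)⁻¹) : Grp k F) = 1 :=
    (QuotientGroup.eq_one_iff _).mpr (Subgroup.subset_normalClosure ⟨α.1, β.1, h.1, h.2, rfl⟩)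
  have hgen : Commute (gen k F α.1) (gen k F β.1) :=
    mul_inv_eq_iff_eq_mul.mp (mul_inv_eq_one.mp hrel)
  rcases α with ⟨i, _ | _⟩ <;> rcases β with ⟨j, _ | _⟩ <;> simp only [sym] <;>
    simp only [Bool.false_eq_true, if_true, if_false]
  · exact hgen.inv_left.inv_right
  · exact hgen.inv_left
  · exact hgen.inv_right
  · exact hgen

end Commutes

section Words

@[simp] lemma wordProd_nil : wordProd k F [] = 1 := rfl

@[simp] lemma wordProd_cons (α : Letter k) (l : List (Letter k)) :
    wordProd k F (α :: l) = sym k F α * wordProd k F l := by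
  simp [wordProd]

@[simp] lemma wordProd_append (l₁ l₂ : List (Letter k)) :
    wordProd k F (l₁ ++ l₂) = wordProd k F l₁ * wordProd k F l₂ := by
  simp [wordProd]

def wordInv (l : List (Letter k)) : List (Letter k) := (l.map Letter.inv).reverse

@[simp] lemma length_wordInv (l : List (Letter k)) : (wordInv l).length = l.length := by
  simp [wordInv]

@[simp] lemma wordInv_wordInv (l : List (Letter k)) : wordInv (wordInv l) = l := by
  simp [wordInv, List.map_reverse, Function.comp_def]

@[simp] lemma wordInv_append (u v : List (Letter k)) :
    wordInv (u ++ v) = wordInv v ++ wordInv u := by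
  simp [wordInv]

@[simp] lemma wordInv_cons (a : Letter k) (l : List (Letter k)) :
    wordInv (a :: l) = wordInv l ++ [a.inv] := by
  simp [wordInv]

@[simp] lemma wordProd_wordInv (l : List (Letter k)) :
    wordProd k F (wordInv l) = (wordProd k F l)⁻¹ := by
  induction l with
  | nil => simp [wordInv]
  | cons a l ih => simp [ih]

lemma commute_sym_wordProd {α : Letter k} {p : List (Letter k)}
    (h : ∀ β ∈ p, Commutes F α β) : Commute (sym k F α) (wordProd k F p) := by
  induction p with
  | nil => exact Commute.one_right _
  | cons b t ih =>
    rw [List.forall_mem_cons] at h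
    simpa using h.1.commute_sym.mul_right (ih h.2)

lemma exists_wordProd_eq (x : Grp k F) : ∃ l, wordProd k F l = x := by
  induction x using QuotientGroup.induction_on with | H z => ?_
  induction z using FreeGroup.induction_on with
  | C1 => exact ⟨[], rfl⟩
  | of i => exact ⟨[(i, true)], by simp [sym, gen, PresentedGroup.of]; rfl⟩
  | inv_of i _ => exact ⟨[(i, false)], by simp [sym, gen, PresentedGroup.of]; rfl⟩
  | mul a b ha hb =>
    obtain ⟨la, ha⟩ := ha
    obtain ⟨lb, hb⟩ := hb
    exact ⟨la ++ lb, by rw [wordProd_append, ha, hb]; rfl⟩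

end Words

section Length

lemma exists_minWord (x : Grp k F) : ∃ l, MinWord x l := by
  obtain ⟨l, hl⟩ := exists_wordProd_eq x
  obtain ⟨m, hm, hlen⟩ := Nat.sInf_mem (⟨l.length, l, hl, rfl⟩ :
    {n | ∃ l : List (Letter k), wordProd k F l = x ∧ l.length = n}.Nonempty)
  exact ⟨m, hm, hlen⟩

lemma len_le_length {l : List (Letter k)} {x : Grp k F} (h : wordProd k F l = x) :
    len x ≤ l.length :=
  Nat.sInf_le ⟨l, h, rfl⟩

@[simp] lemma len_one : len (1 : Grp k F) = 0 :=
  Nat.le_zero.mp (len_le_length wordProd_nil)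

lemma len_eq_zero_iff {x : Grp k F} : len x = 0 ↔ x = 1 := by
  refine ⟨fun h => ?_, fun h => h ▸ len_one⟩
  obtain ⟨l, hl, hlen⟩ := exists_minWord x
  rw [h, List.length_eq_zero_iff] at hlen
  simp [← hl, hlen]

lemma len_mul_le (x y : Grp k F) : len (x * y) ≤ len x + len y := by
  obtain ⟨lx, hx, hlx⟩ := exists_minWord x
  obtain ⟨ly, hy, hly⟩ := exists_minWord y
  simpa [hlx, hly] using len_le_length (l := lx ++ ly) (by rw [wordProd_append, hx, hy])

@[simp] lemma len_inv (x : Grp k F) : len x⁻¹ = len x := by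
  have key : ∀ y : Grp k F, len y⁻¹ ≤ len y := fun y => by
    obtain ⟨l, hl, hlen⟩ := exists_minWord y
    simpa [hlen] using len_le_length (l := wordInv l) (by rw [wordProd_wordInv, hl])
  exact le_antisymm (key x) (by simpa using key x⁻¹)

lemma len_inv_mul_comm (x y : Grp k F) : len (x⁻¹ * y) = len (y⁻¹ * x) := by
  rw [← len_inv, mul_inv_rev, inv_inv]

lemma len_le_len_add_len_inv_mul (x y : Grp k F) : len y ≤ len x + len (x⁻¹ * y) := by
  simpa using len_mul_le x (x⁻¹ * y)

lemma len_inv_mul_le (x y z : Grp k F) : len (x⁻¹ * y) ≤ len (x⁻¹ * z) + len (z⁻¹ * y) := by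
  simpa [mul_assoc] using len_mul_le (x⁻¹ * z) (z⁻¹ * y)

end Length

section Reduced

def Cancellable (F : Set (Sym2 (Fin k))) (α : Letter k) (l : List (Letter k)) : Prop :=
  ∃ p q, l = p ++ α.inv :: q ∧ ∀ β ∈ p, Commutes F α β

def HasCancellation (F : Set (Sym2 (Fin k))) (l : List (Letter k)) : Prop :=
  ∃ a γ b c, l = a ++ γ :: (b ++ γ.inv :: c) ∧ ∀ δ ∈ b, Commutes F γ δ

def IsReduced (F : Set (Sym2 (Fin k))) (l : List (Letter k)) : Prop := ¬ HasCancellation F l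

variable {α β : Letter k} {l t : List (Letter k)}

lemma cancellable_cons :
    Cancellable F α (β :: t) ↔ β = α.inv ∨ (Commutes F α β ∧ Cancellable F α t) := by
  constructor
  · rintro ⟨_ | ⟨p₀, p⟩, q, h, hp⟩
    · exact Or.inl (List.cons.inj h).1
    · obtain ⟨rfl, rfl⟩ := List.cons.inj h
      rw [List.forall_mem_cons] at hp
      exact Or.inr ⟨hp.1, p, q, rfl, hp.2⟩
  · rintro (rfl | ⟨h, p, q, rfl, hp⟩)
    · exact ⟨[], t, rfl, by simp⟩
    · exact ⟨β :: p, q, rfl, List.forall_mem_cons.mpr ⟨h, hp⟩⟩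

lemma hasCancellation_cons :
    HasCancellation F (β :: t) ↔ HasCancellation F t ∨ Cancellable F β t := by
  constructor
  · rintro ⟨_ | ⟨a₀, a⟩, γ, b, c, h, hb⟩
    · obtain ⟨rfl, rfl⟩ := List.cons.inj h
      exact Or.inr ⟨b, c, rfl, hb⟩
    · exact Or.inl ⟨a, γ, b, c, (List.cons.inj h).2, hb⟩
  · rintro (⟨a, γ, b, c, rfl, hb⟩ | ⟨p, q, rfl, hp⟩)
    · exact ⟨β :: a, γ, b, c, rfl, hb⟩
    · exact ⟨[], β, p, q, rfl, hp⟩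

lemma isReduced_nil : IsReduced F ([] : List (Letter k)) := by
  rintro ⟨a, γ, b, c, h, -⟩
  simp at h

lemma isReduced_cons : IsReduced F (β :: t) ↔ IsReduced F t ∧ ¬ Cancellable F β t := by
  rw [IsReduced, hasCancellation_cons, not_or]
  rfl

lemma MinWord.isReduced {x : Grp k F} (h : MinWord x l) : IsReduced F l := by
  rintro ⟨a, γ, b, c, rfl, hb⟩
  have hshort : wordProd k F (a ++ (b ++ c)) = x := by
    rw [← h.1]
    simp only [wordProd_append, wordProd_cons, sym_inv]
    rw [← mul_assoc (sym k F γ), (commute_sym_wordProd hb).eq]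
    group
  have hle := len_le_length hshort
  have hlen := h.2
  simp only [List.length_append, List.length_cons] at hle hlen
  omega

lemma cancellable_insert {p q : List (Letter k)} (hβα : Commutes F β α)
    (h : Cancellable F β (p ++ q)) : Cancellable F β (p ++ α.inv :: q) := by
  induction p with
  | nil => exact cancellable_cons.mpr (Or.inr ⟨by simpa using hβα, h⟩)
  | cons c p ih =>
    rw [List.cons_append, cancellable_cons] at h ⊢
    exact h.imp_right fun h => ⟨h.1, ih h.2⟩

lemma hasCancellation_insert {p q : List (Letter k)} (hp : ∀ β ∈ p, Commutes F α β)
    (h : HasCancellation F (p ++ q)) : HasCancellation F (p ++ α.inv :: q) := by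
  induction p with
  | nil => exact hasCancellation_cons.mpr (Or.inl h)
  | cons b p ih =>
    rw [List.forall_mem_cons] at hp
    rw [List.cons_append, hasCancellation_cons] at h ⊢
    exact h.imp (ih hp.2) (cancellable_insert hp.1.symm)

lemma IsReduced.erase {p q : List (Letter k)} (h : IsReduced F (p ++ α.inv :: q))
    (hp : ∀ β ∈ p, Commutes F α β) : IsReduced F (p ++ q) :=
  fun hc => h (hasCancellation_insert hp hc)

lemma IsReduced.wordInv (h : IsReduced F l) : IsReduced F (wordInv l) := by
  rintro ⟨a, γ, b, c, hl, hb⟩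
  apply h
  refine ⟨GraphGroupPaper.wordInv c, γ, GraphGroupPaper.wordInv b, GraphGroupPaper.wordInv a,
    ?_, ?_⟩
  · simpa using congrArg GraphGroupPaper.wordInv hl
  · intro δ hδ
    obtain ⟨δ', hδ', rfl⟩ := List.mem_map.mp (List.mem_reverse.mp hδ)
    exact commutes_inv_right.mpr (hb δ' hδ')

end Reduced

section Action

variable {α β : Letter k} {l l' p q : List (Letter k)}

lemma inv_not_mem_of_forall_commutes (hp : ∀ β ∈ p, Commutes F α β) : α.inv ∉ p :=
  fun h => not_commutes_self α (by simpa using hp _ h)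

lemma erase_eq_of_forall_commutes (hp : ∀ β ∈ p, Commutes F α β) :
    (p ++ α.inv :: q).erase α.inv = p ++ q := by
  rw [List.erase_append_right _ (inv_not_mem_of_forall_commutes hp), List.erase_cons_head]

lemma Cancellable.erase (h : Cancellable F α l) (hαβ : Commutes F α β) :
    Cancellable F α (l.erase β.inv) := by
  obtain ⟨p, q, rfl, hp⟩ := h
  by_cases hβ : β.inv ∈ p
  · exact ⟨p.erase β.inv, q, List.erase_append_left _ hβ,
      fun δ hδ => hp δ ((List.erase_subset) hδ)⟩
  · refine ⟨p, q.erase β.inv, ?_, hp⟩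
    have hne : α.inv ≠ β.inv := fun e => hαβ.1 (by simpa using congrArg Prod.fst e)
    rw [List.erase_append_right _ hβ, List.erase_cons_tail (by simpa using hne)]

lemma Cancellable.of_erase (h : Cancellable F α l) (hαβ : Commutes F α β)
    (hβ : Cancellable F β (l.erase α.inv)) : Cancellable F β l := by
  obtain ⟨p, q, rfl, hp⟩ := h
  rw [erase_eq_of_forall_commutes hp] at hβ
  exact cancellable_insert hαβ.symm hβ

open Classical in
/-- Models left multiplication by `sym k F α` on words. -/
noncomputable def actList (F : Set (Sym2 (Fin k))) (α : Letter k) (l : List (Letter k)) :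
    List (Letter k) :=
  if Cancellable F α l then l.erase α.inv else α :: l

lemma actList_of_cancellable (h : Cancellable F α l) : actList F α l = l.erase α.inv :=
  if_pos h

lemma actList_of_not_cancellable (h : ¬ Cancellable F α l) : actList F α l = α :: l :=
  if_neg h

lemma length_actList_le (α : Letter k) (l : List (Letter k)) :
    (actList F α l).length ≤ l.length + 1 := by
  unfold actList
  split_ifs
  · exact List.length_erase_le.trans (Nat.le_succ _)
  · simp

lemma IsReduced.actList (h : IsReduced F l) : IsReduced F (actList F α l) := by
  by_cases hc : Cancellable F α l
  · obtain ⟨p, q, rfl, hp⟩ := hc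
    rw [actList_of_cancellable ⟨p, q, rfl, hp⟩, erase_eq_of_forall_commutes hp]
    exact h.erase hp
  · rw [actList_of_not_cancellable hc]
    exact isReduced_cons.mpr ⟨h, hc⟩

lemma IsReduced.not_cancellable_inv (h : IsReduced F (p ++ α.inv :: q))
    (hp : ∀ β ∈ p, Commutes F α β) : ¬ Cancellable F α.inv (p ++ q) := by
  rintro ⟨p₁, q₁, hpq, hp₁⟩
  rw [Letter.inv_inv] at hpq
  rcases List.append_eq_append_iff.mp hpq with ⟨a, rfl, rfl⟩ | ⟨c, hc₁, hc₂⟩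
  · exact h ⟨p, α.inv, a, q₁, by simp, fun δ hδ => by
      simpa using hp₁ δ (List.mem_append_right _ hδ)⟩
  · cases c with
    | nil => exact h ⟨p, α.inv, [], q₁, by simp_all, by simp⟩
    | cons c w =>
      obtain ⟨rfl, -⟩ := List.cons.inj hc₂
      exact not_commutes_self _ (hp _ (by simp [hc₁]))

def SwapStep (F : Set (Sym2 (Fin k))) (l l' : List (Letter k)) : Prop :=
  ∃ p x y q, Commutes F x y ∧ l = p ++ x :: y :: q ∧ l' = p ++ y :: x :: q

lemma SwapStep.symm (h : SwapStep F l l') : SwapStep F l' l := by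
  obtain ⟨p, x, y, q, hc, rfl, rfl⟩ := h
  exact ⟨p, y, x, q, hc.symm, rfl, rfl⟩

lemma SwapStep.cons (h : SwapStep F l l') (a : Letter k) : SwapStep F (a :: l) (a :: l') := by
  obtain ⟨p, x, y, q, hc, rfl, rfl⟩ := h
  exact ⟨a :: p, x, y, q, hc, rfl, rfl⟩

lemma SwapStep.length_eq (h : SwapStep F l l') : l.length = l'.length := by
  obtain ⟨p, x, y, q, hc, rfl, rfl⟩ := h
  simp

lemma SwapStep.cancellable (h : SwapStep F l l') (hα : Cancellable F α l) :
    Cancellable F α l' := by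
  obtain ⟨p, x, y, q, hc, rfl, rfl⟩ := h
  induction p with
  | nil =>
    simp only [List.nil_append, cancellable_cons] at hα ⊢
    rcases hα with rfl | ⟨hx, rfl | ⟨hy, hα⟩⟩
    · exact Or.inr ⟨commutes_inv_left.mp hc, Or.inl rfl⟩
    · exact Or.inl rfl
    · exact Or.inr ⟨hy, Or.inr ⟨hx, hα⟩⟩
  | cons c p ih =>
    rw [List.cons_append, cancellable_cons] at hα ⊢
    exact hα.imp_right fun h => ⟨h.1, ih h.2⟩

lemma SwapStep.hasCancellation (h : SwapStep F l l') (hl : HasCancellation F l) :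
    HasCancellation F l' := by
  obtain ⟨p, x, y, q, hc, rfl, rfl⟩ := h
  induction p with
  | nil =>
    simp only [List.nil_append, hasCancellation_cons] at hl ⊢
    rcases hl with (hl | hy) | hx
    · exact Or.inl (Or.inl hl)
    · exact Or.inr (cancellable_cons.mpr (Or.inr ⟨hc.symm, hy⟩))
    · rcases cancellable_cons.mp hx with hyx | ⟨-, hx⟩
      · exact absurd hyx hc.ne_inv
      · exact Or.inl (Or.inr hx)
  | cons c p ih =>
    rw [List.cons_append, hasCancellation_cons] at hl ⊢
    exact hl.imp ih (SwapStep.cancellable ⟨p, x, y, q, hc, rfl, rfl⟩)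

lemma SwapStep.erase (h : SwapStep F l l') (a : Letter k) :
    SwapStep F (l.erase a) (l'.erase a) ∨ l.erase a = l'.erase a := by
  obtain ⟨p, x, y, q, hc, rfl, rfl⟩ := h
  by_cases ha : a ∈ p
  · simp only [List.erase_append_left _ ha]
    exact Or.inl ⟨p.erase a, x, y, q, hc, rfl, rfl⟩
  · simp only [List.erase_append_right _ ha]
    have hxy : x ≠ y := fun e => hc.1 (congrArg Prod.fst e)
    by_cases hx : x = a
    · subst hx
      right
      simp [List.erase_cons_tail (b := y) (by simpa using Ne.symm hxy)]
    by_cases hy : y = a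
    · subst hy
      right
      simp [List.erase_cons_tail (b := x) (by simpa using hxy)]
    · left
      simp only [List.erase_cons, beq_iff_eq, hx, hy, if_false]
      exact ⟨p, x, y, q.erase a, hc, rfl, rfl⟩

end Action

def Trace (k : ℕ) (F : Set (Sym2 (Fin k))) := Quot (SwapStep (k := k) F)

namespace Trace

variable {α β : Letter k} {l l' p q : List (Letter k)}

def mk (l : List (Letter k)) : Trace k F := Quot.mk _ l

lemma mk_eq_of_swapStep (h : SwapStep F l l') : (mk l : Trace k F) = mk l' := Quot.sound h

def length : Trace k F → ℕ := Quot.lift List.length fun _ _ h => h.length_eq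

def IsReduced : Trace k F → Prop :=
  Quot.lift (GraphGroupPaper.IsReduced F) fun _ _ h =>
    propext ⟨fun hl hc => hl (h.symm.hasCancellation hc), fun hl hc => hl (h.hasCancellation hc)⟩

def cons (a : Letter k) : Trace k F → Trace k F :=
  Quot.map (a :: ·) fun _ _ h => h.cons a

lemma mk_cons_append (hp : ∀ β ∈ p, Commutes F α β) :
    (mk (α :: (p ++ q)) : Trace k F) = mk (p ++ α :: q) := by
  induction p with
  | nil => rfl
  | cons b p ih =>
    rw [List.forall_mem_cons] at hp
    have hswap : SwapStep F (α :: b :: (p ++ q)) (b :: α :: (p ++ q)) :=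
      ⟨[], α, b, p ++ q, hp.1, rfl, rfl⟩
    rw [List.cons_append, mk_eq_of_swapStep hswap]
    exact congrArg (cons b) (ih hp.2)

lemma mk_actList_eq (h : SwapStep F l l') :
    (mk (actList F α l) : Trace k F) = mk (actList F α l') := by
  by_cases hc : Cancellable F α l
  · rw [actList_of_cancellable hc, actList_of_cancellable (h.cancellable hc)]
    rcases h.erase α.inv with h' | h'
    · exact mk_eq_of_swapStep h'
    · rw [h']
  · rw [actList_of_not_cancellable hc,
      actList_of_not_cancellable fun hc' => hc (h.symm.cancellable hc')]
    exact mk_eq_of_swapStep (h.cons α)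

noncomputable def act (α : Letter k) : Trace k F → Trace k F :=
  Quot.lift (fun l => mk (actList F α l)) fun _ _ h => mk_actList_eq h

@[simp] lemma act_mk (α : Letter k) (l : List (Letter k)) :
    act α (mk l : Trace k F) = mk (actList F α l) := rfl

lemma length_act_le (α : Letter k) (t : Trace k F) : (act α t).length ≤ t.length + 1 := by
  induction t using Quot.inductionOn with
  | h l => exact length_actList_le α l

lemma IsReduced.act {t : Trace k F} (h : t.IsReduced) : (act α t).IsReduced := by
  induction t using Quot.inductionOn with
  | h l => exact GraphGroupPaper.IsReduced.actList h

lemma act_inv_act_mk (h : GraphGroupPaper.IsReduced F l) :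
    act α.inv (act α (mk l : Trace k F)) = mk l := by
  simp only [act_mk]
  by_cases hc : Cancellable F α l
  · obtain ⟨p, q, rfl, hp⟩ := hc
    rw [actList_of_cancellable ⟨p, q, rfl, hp⟩, erase_eq_of_forall_commutes hp]
    rw [actList_of_not_cancellable (h.not_cancellable_inv hp)]
    exact mk_cons_append fun δ hδ => commutes_inv_left.mpr (hp δ hδ)
  · rw [actList_of_not_cancellable hc,
      actList_of_cancellable (cancellable_cons.mpr (Or.inl (Letter.inv_inv α).symm)),
      Letter.inv_inv, List.erase_cons_head]

lemma act_comm (hαβ : Commutes F α β) (t : Trace k F) :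
    act α (act β t) = act β (act α t) := by
  induction t using Quot.inductionOn with | h l => ?_
  change mk (actList F α (actList F β l)) = mk (actList F β (actList F α l))
  have hβα : Commutes F β α := hαβ.symm
  by_cases hα : Cancellable F α l <;> by_cases hβ : Cancellable F β l
  · rw [actList_of_cancellable hβ, actList_of_cancellable hα,
      actList_of_cancellable (hα.erase hαβ), actList_of_cancellable (hβ.erase hβα),
      List.erase_comm]
  · have hβ' : ¬ Cancellable F β (l.erase α.inv) := fun h => hβ (hα.of_erase hαβ h)
    rw [actList_of_not_cancellable hβ, actList_of_cancellable hα,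
      actList_of_cancellable (cancellable_cons.mpr (Or.inr ⟨hαβ, hα⟩)),
      actList_of_not_cancellable hβ', List.erase_cons_tail (by simpa using hαβ.ne_inv)]
  · have hα' : ¬ Cancellable F α (l.erase β.inv) := fun h => hα (hβ.of_erase hβα h)
    rw [actList_of_cancellable hβ, actList_of_not_cancellable hα,
      actList_of_cancellable (cancellable_cons.mpr (Or.inr ⟨hβα, hβ⟩)),
      actList_of_not_cancellable hα', List.erase_cons_tail (by simpa using hαβ.symm.ne_inv)]
  · have hα' : ¬ Cancellable F α (β :: l) := by
      rw [cancellable_cons]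
      exact not_or.mpr ⟨hαβ.ne_inv, fun h => hα h.2⟩
    have hβ' : ¬ Cancellable F β (α :: l) := by
      rw [cancellable_cons]
      exact not_or.mpr ⟨hβα.ne_inv, fun h => hβ h.2⟩
    rw [actList_of_not_cancellable hβ, actList_of_not_cancellable hα,
      actList_of_not_cancellable hα', actList_of_not_cancellable hβ']
    exact mk_eq_of_swapStep ⟨[], α, β, l, hαβ, rfl, rfl⟩

end Trace

def ReducedTrace (k : ℕ) (F : Set (Sym2 (Fin k))) := {t : Trace k F // t.IsReduced}

namespace ReducedTrace

noncomputable def act (α : Letter k) (s : ReducedTrace k F) : ReducedTrace k F :=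
  ⟨Trace.act α s.1, s.2.act⟩

lemma act_inv_act (α : Letter k) (s : ReducedTrace k F) : act α.inv (act α s) = s := by
  obtain ⟨t, ht⟩ := s
  induction t using Quot.inductionOn with
  | h l => exact Subtype.ext (Trace.act_inv_act_mk ht)

lemma act_comm {α β : Letter k} (hαβ : Commutes F α β) (s : ReducedTrace k F) :
    act α (act β s) = act β (act α s) :=
  Subtype.ext (Trace.act_comm hαβ s.1)

noncomputable def genPerm (i : Fin k) : Equiv.Perm (ReducedTrace k F) where
  toFun := act (i, true)
  invFun := act (i, false)
  left_inv := act_inv_act (i, true)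
  right_inv := act_inv_act (i, false)

noncomputable def rep : Grp k F →* Equiv.Perm (ReducedTrace k F) :=
  PresentedGroup.toGroup (f := genPerm) (by
    rintro r ⟨i, j, hij, hF, rfl⟩
    simp only [map_mul, map_inv, FreeGroup.lift_apply_of]
    rw [mul_inv_eq_one, mul_inv_eq_iff_eq_mul]
    exact Equiv.ext (act_comm (α := (i, true)) (β := (j, true)) ⟨hij, hF⟩))

lemma rep_sym (α : Letter k) (s : ReducedTrace k F) : rep (sym k F α) s = act α s := by
  rcases α with ⟨i, _ | _⟩
  · change (rep (gen k F i))⁻¹ s = _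
    rw [rep, gen, PresentedGroup.toGroup.of]
    rfl
  · change rep (gen k F i) s = _
    rw [rep, gen, PresentedGroup.toGroup.of]
    rfl

def empty : ReducedTrace k F := ⟨Trace.mk [], isReduced_nil⟩

end ReducedTrace

noncomputable def normalForm (x : Grp k F) : Trace k F :=
  (ReducedTrace.rep x ReducedTrace.empty).1

lemma normalForm_sym_mul (α : Letter k) (x : Grp k F) :
    normalForm (sym k F α * x) = Trace.act α (normalForm x) := by
  rw [normalForm, map_mul, Equiv.Perm.mul_apply, ReducedTrace.rep_sym]
  rfl

lemma normalForm_one : normalForm (1 : Grp k F) = Trace.mk [] := by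
  rw [normalForm, map_one]
  rfl

lemma length_normalForm_wordProd_le (l : List (Letter k)) :
    (normalForm (wordProd k F l)).length ≤ l.length := by
  induction l with
  | nil => rw [wordProd_nil, normalForm_one]; rfl
  | cons a t ih =>
    rw [wordProd_cons, normalForm_sym_mul, List.length_cons]
    exact (Trace.length_act_le a _).trans (Nat.succ_le_succ ih)

lemma IsReduced.normalForm_wordProd {l : List (Letter k)} (h : IsReduced F l) :
    normalForm (wordProd k F l) = Trace.mk l := by
  induction l with
  | nil => exact normalForm_one
  | cons a t ih =>
    obtain ⟨ht, hat⟩ := isReduced_cons.mp h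
    rw [wordProd_cons, normalForm_sym_mul, ih ht, Trace.act_mk,
      actList_of_not_cancellable hat]

theorem IsReduced.minWord {l : List (Letter k)} (h : IsReduced F l) :
    MinWord (wordProd k F l) l := by
  refine ⟨rfl, le_antisymm ?_ (len_le_length rfl)⟩
  obtain ⟨m, hm, hmlen⟩ := exists_minWord (wordProd k F l)
  calc l.length = (normalForm (wordProd k F l)).length := by rw [h.normalForm_wordProd]; rfl
    _ = (normalForm (wordProd k F m)).length := by rw [hm]
    _ ≤ m.length := length_normalForm_wordProd_le m
    _ = len (wordProd k F l) := hmlen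

lemma len_sym (α : Letter k) : len (sym k F α) = 1 := by
  have h : IsReduced F [α] := isReduced_cons.mpr ⟨isReduced_nil, fun ⟨p, q, h, _⟩ => by simp at h⟩
  simpa using h.minWord.2.symm

section Order

variable {x y z : Grp k F}

lemma le_of_len_add_le (h : len x + len (x⁻¹ * y) ≤ len y) : le x y :=
  le_antisymm (len_le_len_add_len_inv_mul x y) h

lemma le.refl (x : Grp k F) : le x x := by simp [le]

lemma one_le (x : Grp k F) : le 1 x := by simp [le]

lemma le.len_le (h : le x y) : len x ≤ len y := by
  rw [le] at h
  omega

lemma le.trans (hxy : le x y) (hyz : le y z) : le x z := by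
  refine le_of_len_add_le ?_
  have := len_inv_mul_le x z y
  rw [le] at hxy hyz
  omega

lemma le.eq_of_len_le (h : le x y) (hlen : len y ≤ len x) : x = y := by
  rw [le] at h
  exact inv_mul_eq_one.mp (len_eq_zero_iff.mp (by omega))

lemma le.len_eq (h : le x y) : len y = len x + dist x y := h

lemma dist_comm (x y : Grp k F) : dist x y = dist y x := len_inv_mul_comm x y

lemma dist_add_dist_of_le_of_le (hxy : le x y) (hyz : le y z) :
    dist x y + dist y z = dist x z := by
  have h₁ := len_inv_mul_le x z y
  have h₂ := len_le_len_add_len_inv_mul x z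
  rw [le] at hxy hyz
  unfold dist
  omega

end Order

section Concatenation

variable {β : Letter k} {u v : List (Letter k)}

lemma cancellable_append : Cancellable F β (u ++ v) ↔
    Cancellable F β u ∨ ((∀ δ ∈ u, Commutes F β δ) ∧ Cancellable F β v) := by
  induction u with
  | nil => simp [Cancellable]
  | cons a u ih =>
    rw [List.cons_append, cancellable_cons, cancellable_cons, ih, List.forall_mem_cons]
    tauto

lemma HasCancellation.of_append (h : HasCancellation F (u ++ v)) :
    HasCancellation F u ∨ HasCancellation F v ∨
      ∃ γ a b, u = a ++ γ :: b ∧ (∀ δ ∈ b, Commutes F γ δ) ∧ Cancellable F γ v := by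
  induction u with
  | nil => exact Or.inr (Or.inl h)
  | cons β u ih =>
    rw [List.cons_append, hasCancellation_cons] at h
    rcases h with h | h
    · rcases ih h with h | h | ⟨γ, a, b, rfl, hb, hγ⟩
      · exact Or.inl (hasCancellation_cons.mpr (Or.inl h))
      · exact Or.inr (Or.inl h)
      · exact Or.inr (Or.inr ⟨γ, β :: a, b, rfl, hb, hγ⟩)
    · rcases cancellable_append.mp h with h | ⟨hu, hv⟩
      · exact Or.inl (hasCancellation_cons.mpr (Or.inr h))
      · exact Or.inr (Or.inr ⟨β, [], u, rfl, hu, hv⟩)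

end Concatenation

/-- `α` is a first letter of `x`: some geodesic word for `x` starts with `α`. -/
def IsFirstLetter (α : Letter k) (x : Grp k F) : Prop := le (sym k F α) x

section FirstLetter

variable {α γ : Letter k} {x y w j : Grp k F} {l : List (Letter k)}

lemma isFirstLetter_iff : IsFirstLetter α x ↔ len x = len ((sym k F α)⁻¹ * x) + 1 := by
  rw [IsFirstLetter, le, len_sym, add_comm]

lemma IsFirstLetter.trans (h : IsFirstLetter α x) (hxy : le x y) : IsFirstLetter α y :=
  le.trans h hxy

lemma len_le_len_inv_sym_mul_add_one (α : Letter k) (x : Grp k F) :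
    len x ≤ len ((sym k F α)⁻¹ * x) + 1 := by
  simpa [len_sym, add_comm] using len_le_len_add_len_inv_mul (sym k F α) x

lemma MinWord.isFirstLetter_iff (h : MinWord x l) :
    IsFirstLetter α x ↔ Cancellable F α.inv l := by
  rw [GraphGroupPaper.isFirstLetter_iff]
  constructor
  · intro hα
    by_contra hc
    have hred := (isReduced_cons.mpr ⟨h.isReduced, hc⟩).minWord
    rw [wordProd_cons, sym_inv, h.1] at hred
    have := hred.2
    simp only [List.length_cons, h.2] at this
    omega
  · rintro ⟨p, q, rfl, hp⟩
    have hpq : wordProd k F (p ++ q) = (sym k F α)⁻¹ * x := by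
      rw [← h.1]
      simp only [wordProd_append, wordProd_cons, Letter.inv_inv]
      have hc := commute_sym_wordProd fun δ hδ => commutes_inv_left.mp (hp δ hδ)
      rw [← mul_assoc, hc.inv_left.eq]
      group
    have h₁ := len_le_length hpq
    have h₂ := h.2
    have h₃ := len_le_len_inv_sym_mul_add_one α x
    simp only [List.length_append, List.length_cons] at h₁ h₂
    omega

lemma exists_isFirstLetter (hx : x ≠ 1) : ∃ α, IsFirstLetter α x := by
  obtain ⟨l, hl⟩ := exists_minWord x
  cases l with
  | nil => exact absurd (by simpa using hl.1.symm) hx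
  | cons α t =>
    exact ⟨α, hl.isFirstLetter_iff.mpr (cancellable_cons.mpr (Or.inl (Letter.inv_inv α).symm))⟩

lemma le_inv_sym_mul (hα : IsFirstLetter α x) (hxy : le x y) :
    le ((sym k F α)⁻¹ * x) ((sym k F α)⁻¹ * y) := by
  have hy := isFirstLetter_iff.mp (hα.trans hxy)
  rw [isFirstLetter_iff] at hα
  rw [le] at hxy ⊢
  rw [show ((sym k F α)⁻¹ * x)⁻¹ * ((sym k F α)⁻¹ * y) = x⁻¹ * y by group]
  omega

lemma le_inv_sym_mul_iff (hx : IsFirstLetter α x) (hy : IsFirstLetter α y) :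
    le ((sym k F α)⁻¹ * x) ((sym k F α)⁻¹ * y) ↔ le x y := by
  refine ⟨fun h => ?_, le_inv_sym_mul hx⟩
  rw [isFirstLetter_iff] at hx hy
  rw [le] at h ⊢
  rw [show ((sym k F α)⁻¹ * x)⁻¹ * ((sym k F α)⁻¹ * y) = x⁻¹ * y by group] at h
  omega

lemma sym_mul_le (hα : IsFirstLetter α w) (h : le y ((sym k F α)⁻¹ * w)) :
    le (sym k F α * y) w ∧ IsFirstLetter α (sym k F α * y) := by
  rw [isFirstLetter_iff] at hα ⊢
  rw [le] at h
  have e : (sym k F α * y)⁻¹ * w = y⁻¹ * ((sym k F α)⁻¹ * w) := by group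
  have h₁ := len_le_len_add_len_inv_mul (sym k F α * y) w
  have h₂ := len_mul_le (sym k F α) y
  rw [len_sym] at h₂
  rw [e] at h₁
  rw [inv_mul_cancel_left]
  exact ⟨le_of_len_add_le (by rw [e]; omega), by omega⟩

lemma mul_sym_le (h : le y x) (hγ : IsFirstLetter γ (y⁻¹ * x)) :
    le (y * sym k F γ) x ∧ len (y * sym k F γ) = len y + 1 := by
  rw [isFirstLetter_iff] at hγ
  rw [le] at h
  have e : (y * sym k F γ)⁻¹ * x = (sym k F γ)⁻¹ * (y⁻¹ * x) := by group
  have h₁ := len_le_len_add_len_inv_mul (y * sym k F γ) x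
  have h₂ := len_mul_le y (sym k F γ)
  rw [len_sym] at h₂
  rw [e] at h₁
  exact ⟨le_of_len_add_le (by rw [e]; omega), by omega⟩

lemma le_mul_sym (h : le x y) (hγ : IsFirstLetter γ (y⁻¹ * x)) :
    le x (y * sym k F γ) ∧ len (y * sym k F γ) + 1 = len y := by
  rw [isFirstLetter_iff] at hγ
  rw [le] at h
  have e : (sym k F γ)⁻¹ * (y⁻¹ * x) = (x⁻¹ * (y * sym k F γ))⁻¹ := by group
  have h₁ := len_le_len_add_len_inv_mul x (y * sym k F γ)
  have h₂ : len y ≤ len (y * sym k F γ) + 1 := by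
    simpa [len_sym] using len_mul_le (y * sym k F γ) (sym k F γ)⁻¹
  rw [e, len_inv, len_inv_mul_comm y x] at hγ
  exact ⟨le_of_len_add_le (by omega), by omega⟩

lemma le_sym_mul_of_commute (hc : Commute (sym k F α) y) (hyj : le y j)
    (hαj : IsFirstLetter α (sym k F α * j)) : le y (sym k F α * j) := by
  refine le_of_len_add_le ?_
  have h₁ := isFirstLetter_iff.mp hαj
  have h₂ := len_mul_le (sym k F α) (y⁻¹ * j)
  rw [len_sym] at h₂
  rw [inv_mul_cancel_left] at h₁
  rw [le] at hyj
  rw [← mul_assoc, ← hc.inv_right.eq, mul_assoc]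
  omega

lemma commute_and_le_of_not_isFirstLetter (hyw : le y w) (hα : IsFirstLetter α w)
    (hαy : ¬ IsFirstLetter α y) : Commute (sym k F α) y ∧ le y ((sym k F α)⁻¹ * w) := by
  obtain ⟨p, hp⟩ := exists_minWord y
  obtain ⟨t, ht⟩ := exists_minWord (y⁻¹ * w)
  have hpt : MinWord w (p ++ t) := by
    refine ⟨by rw [wordProd_append, hp.1, ht.1, mul_inv_cancel_left], ?_⟩
    rw [List.length_append, hp.2, ht.2, ← hyw]
  rcases cancellable_append.mp (hpt.isFirstLetter_iff.mp hα) with h | ⟨hcomm, hαt⟩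
  · exact absurd (hp.isFirstLetter_iff.mpr h) hαy
  · have hc : Commute (sym k F α) y := by
      rw [← hp.1]
      exact commute_sym_wordProd fun δ hδ => commutes_inv_left.mp (hcomm δ hδ)
    refine ⟨hc, le_of_len_add_le ?_⟩
    have h₁ := isFirstLetter_iff.mp (ht.isFirstLetter_iff.mpr hαt)
    have h₂ := isFirstLetter_iff.mp hα
    rw [show y⁻¹ * ((sym k F α)⁻¹ * w) = (sym k F α)⁻¹ * (y⁻¹ * w) by
      rw [← mul_assoc, ← mul_assoc, hc.inv_inv.eq]]
    rw [le] at hyw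
    omega

lemma len_inv_mul_eq_add (h : ∀ γ, IsFirstLetter γ x → ¬ IsFirstLetter γ y) :
    len (x⁻¹ * y) = len x + len y := by
  obtain ⟨p, hp⟩ := exists_minWord x
  obtain ⟨q, hq⟩ := exists_minWord y
  have hred : IsReduced F (wordInv p ++ q) := by
    intro hc
    rcases hc.of_append with hc | hc | ⟨γ, a, b, hab, hb, hγ⟩
    · exact hp.isReduced.wordInv (by simpa using hc)
    · exact hq.isReduced hc
    · have hpab : p = wordInv b ++ γ.inv :: wordInv a := by
        simpa using congrArg GraphGroupPaper.wordInv hab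
      refine h γ.inv (hp.isFirstLetter_iff.mpr ⟨wordInv b, wordInv a, ?_, ?_⟩)
        (hq.isFirstLetter_iff.mpr (by simpa using hγ))
      · simpa using hpab
      · intro δ hδ
        obtain ⟨δ', hδ', rfl⟩ := List.mem_map.mp (List.mem_reverse.mp hδ)
        simpa using hb δ' hδ'
  have := hred.minWord.2
  simp only [wordProd_append, wordProd_wordInv, hp.1, hq.1, List.length_append, length_wordInv,
    hp.2, hq.2] at this
  exact this.symm

end FirstLetter

section Lattice

variable {α : Letter k} {x y z w a b j m : Grp k F}

lemma isJoin_one_left (y : Grp k F) : IsJoin 1 y y := ⟨one_le y, le.refl y, fun _ _ h => h⟩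

/-- Inductive step for joins, with `α` a first letter of `x`: here `y'` is `α⁻¹ y` or `y`
according as `α` is a first letter of `y` or not. -/
lemma isJoin_sym_mul {y' : Grp k F} (hα : IsFirstLetter α x)
    (hj : IsJoin ((sym k F α)⁻¹ * x) y' j) (hαj : IsFirstLetter α (sym k F α * j))
    (hy : le y (sym k F α * j))
    (hy' : ∀ u, le x u → le y u → le y' ((sym k F α)⁻¹ * u)) :
    IsJoin x y (sym k F α * j) := by
  refine ⟨(le_inv_sym_mul_iff hα hαj).mp (by rw [inv_mul_cancel_left]; exact hj.1), hy,
    fun u hxu hyu => ?_⟩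
  exact (sym_mul_le (hα.trans hxu) (hj.2.2 _ (le_inv_sym_mul hα hxu) (hy' u hxu hyu))).1

theorem exists_isJoin_of_le (hx : le x w) (hy : le y w) : ∃ j, IsJoin x y j := by
  induction hn : len x generalizing x y w with
  | zero => exact ⟨y, len_eq_zero_iff.mp hn ▸ isJoin_one_left y⟩
  | succ n ih =>
    obtain ⟨α, hα⟩ := exists_isFirstLetter (x := x) fun h => by simp [h] at hn
    have hαw := hα.trans hx
    have hn' : len ((sym k F α)⁻¹ * x) = n := by
      have := isFirstLetter_iff.mp hα
      omega
    by_cases hαy : IsFirstLetter α y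
    · obtain ⟨j, hj⟩ := ih (le_inv_sym_mul hα hx) (le_inv_sym_mul hαy hy) hn'
      obtain ⟨-, hαj⟩ := sym_mul_le hαw (hj.2.2 _ (le_inv_sym_mul hα hx) (le_inv_sym_mul hαy hy))
      refine ⟨_, isJoin_sym_mul hα hj hαj ?_ fun u _ hyu => le_inv_sym_mul hαy hyu⟩
      exact (le_inv_sym_mul_iff hαy hαj).mp (by rw [inv_mul_cancel_left]; exact hj.2.1)
    · obtain ⟨hc, hyw⟩ := commute_and_le_of_not_isFirstLetter hy hαw hαy
      obtain ⟨j, hj⟩ := ih (le_inv_sym_mul hα hx) hyw hn'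
      obtain ⟨-, hαj⟩ := sym_mul_le hαw (hj.2.2 _ (le_inv_sym_mul hα hx) hyw)
      exact ⟨_, isJoin_sym_mul hα hj hαj (le_sym_mul_of_commute hc hj.2.1 hαj)
        fun u hxu hyu => (commute_and_le_of_not_isFirstLetter hyu (hα.trans hxu) hαy).2⟩

/-- A common lower bound of maximal length is the greatest one. -/
theorem exists_isMeet (x y : Grp k F) : ∃ m, IsMeet x y m := by
  let S : Set ℕ := {n | ∃ m : Grp k F, le m x ∧ le m y ∧ len m = n}
  have hbdd : BddAbove S := ⟨len x, by rintro _ ⟨m, hm, -, rfl⟩; exact hm.len_le⟩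
  obtain ⟨m, hmx, hmy, hm⟩ : sSup S ∈ S := Nat.sSup_mem ⟨0, 1, one_le x, one_le y, len_one⟩ hbdd
  refine ⟨m, hmx, hmy, fun w hwx hwy => ?_⟩
  obtain ⟨j, hwj, hmj, hj⟩ := exists_isJoin_of_le hwx hmx
  have hjm : len j ≤ len m := hm ▸ le_csSup hbdd ⟨j, hj x hwx hmx, hj y hwy hmy, rfl⟩
  exact hmj.eq_of_len_le hjm ▸ hwj

lemma IsMeet.dist_eq (h : IsMeet x y m) : dist x y = dist m x + dist m y := by
  have key : ∀ γ, IsFirstLetter γ (m⁻¹ * x) → ¬ IsFirstLetter γ (m⁻¹ * y) := by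
    intro γ hx hy
    obtain ⟨hmx, hlen⟩ := mul_sym_le h.1 hx
    have := (h.2.2 _ hmx (mul_sym_le h.2.1 hy).1).len_le
    omega
  have := len_inv_mul_eq_add key
  rwa [show (m⁻¹ * x)⁻¹ * (m⁻¹ * y) = x⁻¹ * y by group] at this

lemma IsJoin.dist_eq (h : IsJoin x y j) : dist x y = dist x j + dist j y := by
  have key : ∀ γ, IsFirstLetter γ (j⁻¹ * x) → ¬ IsFirstLetter γ (j⁻¹ * y) := by
    intro γ hx hy
    obtain ⟨hxj, hlen⟩ := le_mul_sym h.1 hx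
    have := (h.2.2 _ hxj (le_mul_sym h.2.1 hy).1).len_le
    omega
  have := len_inv_mul_eq_add key
  rw [show (j⁻¹ * x)⁻¹ * (j⁻¹ * y) = x⁻¹ * y by group, len_inv_mul_comm j x] at this
  exact this

lemma isJoin_of_dist_add_dist_eq (hy : dist x y + dist y z = dist x z) (hm : IsMeet x z m)
    (ha : IsMeet x y a) (hb : IsMeet z y b) : le m a ∧ le m b ∧ IsJoin a b y := by
  obtain ⟨t, ht⟩ := exists_isMeet a b
  obtain ⟨j, hj⟩ := exists_isJoin_of_le ha.2.1 hb.2.1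
  have htm : le t m := hm.2.2 t (ht.1.trans ha.1) (ht.2.1.trans hb.1)
  have hjy : le j y := hj.2.2 y ha.2.1 hb.2.1
  -- `|y| = |a| + |b| - |m|` by the distance formulas, and `|j| = |a| + |b| - |t|`.
  have hlen : len y ≤ len j ∧ len m ≤ len t := by
    constructor <;> linarith [ha.dist_eq, hb.dist_eq, hm.dist_eq, ht.dist_eq, hj.dist_eq,
      dist_comm y z, dist_comm j b, htm.len_le, hjy.len_le, ha.1.len_eq, ha.2.1.len_eq,
      hb.1.len_eq, hb.2.1.len_eq, hm.1.len_eq, hm.2.1.len_eq, ht.1.len_eq, ht.2.1.len_eq,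
      hj.1.len_eq, hj.2.1.len_eq]
  obtain rfl := hjy.eq_of_len_le hlen.1
  obtain rfl := htm.eq_of_len_le hlen.2
  exact ⟨ht.1, ht.2.1, hj⟩

end Lattice

theorem stmt5_general {k : ℕ} {F : Set (Sym2 (Fin k))}
    (L : Set (Grp k F)) (hL : L.Nonempty) :
    ConvexSet L ↔
      ((∀ x y z : Grp k F, x ∈ L → z ∈ L → le x y → le y z → y ∈ L) ∧
       (∀ x ∈ L, ∀ y ∈ L,
          (∀ m, IsMeet x y m → m ∈ L) ∧ (∀ j, IsJoin x y j → j ∈ L))) := by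
  constructor
  · rintro ⟨-, hconv⟩
    refine ⟨fun x y z hx hz hxy hyz => hconv x z y hx hz (dist_add_dist_of_le_of_le hxy hyz),
      fun x hx y hy => ⟨fun m hm => hconv x y m hx hy ?_, fun j hj => hconv x y j hx hy ?_⟩⟩
    · rw [hm.dist_eq, dist_comm x m]
    · rw [hj.dist_eq]
  · rintro ⟨hbet, hcl⟩
    refine ⟨hL, fun x z y hx hz hy => ?_⟩
    obtain ⟨m, hm⟩ := exists_isMeet x z
    obtain ⟨a, ha⟩ := exists_isMeet x y
    obtain ⟨b, hb⟩ := exists_isMeet z y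
    obtain ⟨hma, hmb, hab⟩ := isJoin_of_dist_add_dist_eq hy hm ha hb
    have hmL : m ∈ L := (hcl x hx z hz).1 m hm
    exact (hcl a (hbet m a x hmL hx hma ha.1) b (hbet m b z hmL hz hmb hb.1)).2 y hab

/-- a nonempty `L` is convex iff (i) it is closed under betweenness
w.r.t. `≤` and (ii) it is closed under meets and finite joins. -/
theorem stmt5 {k : ℕ} (hk : 1 ≤ k) {F : Set (Sym2 (Fin k))}
    (L : Set (Grp k F)) (hL : L.Nonempty) :
    ConvexSet L ↔
      ((∀ x y z : Grp k F, x ∈ L → z ∈ L → le x y → le y z → y ∈ L) ∧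
       (∀ x ∈ L, ∀ y ∈ L,
          (∀ m, IsMeet x y m → m ∈ L) ∧ (∀ j, IsJoin x y j → j ∈ L))) :=
  stmt5_general L hL

end GraphGroupPaper
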